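/- arXiv:2106.13609 — 5 statements merged into one kernel-verified Lean document; each statement's English description precedes it below -/
import Mathlib

section
/- In a pointed forward Θ-metric space, the topology generated by backward balls is contained in the topology generated by forward balls; consequently the distance function d is continuous with respect to the forward topology on both arguments, and the space is Hausdorff in the forward topology. -/
open Set Filter Topology

variable {X : Type*}

/-- Forward ball of an (possibly asymmetric) distance function. -/
def fwdBall (d : X → X → ℝ) (x : X) (r : ℝ) : Set X := {y | d x y < r}

/-- Backward ball. -/
def bwdBall (d : X → X → ℝ) (x : X) (r : ℝ) : Set X := {y | d y x < r}

/-- The forward topology, generated by forward balls. -/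
def fwdTop (d : X → X → ℝ) : TopologicalSpace X :=
  TopologicalSpace.generateFrom {s | ∃ x r, s = fwdBall d x r}

/-- The backward topology, generated by backward balls. -/
def bwdTop (d : X → X → ℝ) : TopologicalSpace X :=
  TopologicalSpace.generateFrom {s | ∃ x r, s = bwdBall d x r}

/-- `d` is an irreversible metric: nonnegative, vanishing exactly on the diagonal, and
satisfying the triangle inequality (symmetry is not required). -/
def IsIrrevMetric (d : X → X → ℝ) : Prop :=
  (∀ x y, 0 ≤ d x y) ∧ (∀ x y, d x y = 0 ↔ x = y) ∧ ∀ x y z, d x z ≤ d x y + d y z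

/-- `(X, star, d)` is a pointed forward `Θ`-metric space: `Θ` is nondecreasing with values ≥ 1
and the reversibility of the closure (in the forward topology) of each forward ball of radius
`r > 0` about `star` is bounded by `Θ r`. -/
def PointedForwardTheta (d : X → X → ℝ) (star : X) (Θ : ℝ → ℝ) : Prop :=
  Monotone Θ ∧ (∀ r, 1 ≤ Θ r) ∧
  ∀ r > 0, ∀ x ∈ @closure X (fwdTop d) (fwdBall d star r),
    ∀ y ∈ @closure X (fwdTop d) (fwdBall d star r), d x y ≤ Θ r * d y x

/-- Every forward ball is open in the forward topology. -/
lemma fwdBall_open (d : X → X → ℝ) (x : X) (r : ℝ) :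
    @IsOpen X (fwdTop d) (fwdBall d x r) :=
  TopologicalSpace.GenerateOpen.basic _ ⟨x, r, rfl⟩

/-- A set containing a forward ball around each of its points is open in the forward
topology. -/
lemma isOpen_of_fwdBall (d : X → X → ℝ) (h0 : ∀ x, d x x = 0) {U : Set X}
    (h : ∀ y ∈ U, ∃ ε > 0, fwdBall d y ε ⊆ U) :
    @IsOpen X (fwdTop d) U := by
  letI : TopologicalSpace X := fwdTop d
  choose ε hε hsub using h
  have hU : U = ⋃ y : U, fwdBall d (y : X) (ε y y.2) := by
    ext w
    constructor
    · intro hw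
      exact mem_iUnion.2 ⟨⟨w, hw⟩, show d w w < _ by rw [h0]; exact hε w hw⟩
    · intro hw
      obtain ⟨y, hy⟩ := mem_iUnion.1 hw
      exact hsub y y.2 hy
  rw [hU]
  exact isOpen_iUnion fun y => fwdBall_open d _ _

/-- Local reversibility bound: for any `y` and any `w` with `d y w < 1`, the reversed distance
is controlled. -/
lemma local_rev (d : X → X → ℝ) (hd : IsIrrevMetric d) (star : X) (Θ : ℝ → ℝ)
    (hΘ : PointedForwardTheta d star Θ) (y : X) :
    ∀ w, d y w < 1 → d w y ≤ Θ (d star y + 1) * d y w := by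
  intro w hw
  set r := d star y + 1 with hr
  have hrpos : 0 < r := by have := hd.1 star y; linarith
  have hy : y ∈ fwdBall d star r := by
    show d star y < r; linarith
  have hwmem : w ∈ fwdBall d star r := by
    show d star w < r
    have := hd.2.2 star y w
    linarith
  letI : TopologicalSpace X := fwdTop d
  exact hΘ.2.2 r hrpos w (subset_closure hwmem) y (subset_closure hy)

/-- In a pointed forward Θ-metric space, the backward topology is contained in
the forward topology (i.e. the forward topology is finer), the distance function is continuous
with respect to the forward topology on both arguments, and the space is Hausdorff in the
forward topology. -/
theorem stmt0 (d : X → X → ℝ) (hd : IsIrrevMetric d) (star : X) (Θ : ℝ → ℝ)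
    (hΘ : PointedForwardTheta d star Θ) :
    fwdTop d ≤ bwdTop d ∧
    (@Continuous (X × X) ℝ (@instTopologicalSpaceProd X X (fwdTop d) (fwdTop d)) _
      (fun p => d p.1 p.2)) ∧
    @T2Space X (fwdTop d) := by
  obtain ⟨hnn, heq, htri⟩ := hd
  have h0 : ∀ x, d x x = 0 := fun x => (heq x x).2 rfl
  have hΛ1 : ∀ r, 1 ≤ Θ r := hΘ.2.1
  have hrev := local_rev d ⟨hnn, heq, htri⟩ star Θ hΘ
  refine ⟨?_, ?_, ?_⟩
  · -- backward topology is coarser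
    apply le_generateFrom
    rintro s ⟨z, s0, rfl⟩
    apply isOpen_of_fwdBall d h0
    intro y hy
    have hy' : d y z < s0 := hy
    set Λ := Θ (d star y + 1) with hΛ
    have hΛpos : 0 < Λ := lt_of_lt_of_le one_pos (hΛ1 _)
    refine ⟨min 1 ((s0 - d y z) / Λ), ?_, ?_⟩
    · exact lt_min one_pos (div_pos (by linarith) hΛpos)
    · intro w hw
      have hw' : d y w < min 1 ((s0 - d y z) / Λ) := hw
      have h1 : d y w < 1 := lt_of_lt_of_le hw' (min_le_left _ _)
      have h2 : d w y ≤ Λ * d y w := hrev y w h1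
      have h3 : Λ * d y w < Λ * ((s0 - d y z) / Λ) :=
        mul_lt_mul_of_pos_left (lt_of_lt_of_le hw' (min_le_right _ _)) hΛpos
      have h4 : Λ * ((s0 - d y z) / Λ) = s0 - d y z := by
        field_simp
      show d w z < s0
      have := htri w y z
      linarith
  · -- continuity of d
    letI : TopologicalSpace X := fwdTop d
    rw [continuous_iff_continuousAt]
    rintro ⟨x, y⟩
    rw [ContinuousAt, Metric.tendsto_nhds]
    intro δ hδ
    set Λx := Θ (d star x + 1) with hΛx
    set Λy := Θ (d star y + 1) with hΛy
    have hΛxpos : 0 < Λx := lt_of_lt_of_le one_pos (hΛ1 _)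
    have hΛypos : 0 < Λy := lt_of_lt_of_le one_pos (hΛ1 _)
    set ε := min 1 (δ / (Λx + Λy + 1)) with hε
    have hεpos : 0 < ε := lt_min one_pos (div_pos hδ (by linarith))
    have hεδ : (Λx + Λy + 1) * ε ≤ δ := by
      have : ε ≤ δ / (Λx + Λy + 1) := min_le_right _ _
      calc (Λx + Λy + 1) * ε ≤ (Λx + Λy + 1) * (δ / (Λx + Λy + 1)) :=
            mul_le_mul_of_nonneg_left this (by linarith)
        _ = δ := by field_simp
    have hmemx : fwdBall d x ε ∈ @nhds X (fwdTop d) x :=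
      (fwdBall_open d x ε).mem_nhds (show d x x < ε by rw [h0]; exact hεpos)
    have hmemy : fwdBall d y ε ∈ @nhds X (fwdTop d) y :=
      (fwdBall_open d y ε).mem_nhds (show d y y < ε by rw [h0]; exact hεpos)
    have hprod : (fwdBall d x ε) ×ˢ (fwdBall d y ε) ∈
        @nhds (X × X) instTopologicalSpaceProd (x, y) := by
      rw [nhds_prod_eq]
      exact Filter.prod_mem_prod hmemx hmemy
    filter_upwards [hprod] with p hp
    obtain ⟨hp1, hp2⟩ := hp
    set w := p.1
    set z := p.2
    have hw : d x w < ε := hp1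
    have hz : d y z < ε := hp2
    have hε1 : ε ≤ 1 := min_le_left _ _
    have hwx : d w x ≤ Λx * d x w := hrev x w (lt_of_lt_of_le hw hε1)
    have hzy : d z y ≤ Λy * d y z := hrev y z (lt_of_lt_of_le hz hε1)
    have hwx' : d w x < Λx * ε := lt_of_le_of_lt hwx (mul_lt_mul_of_pos_left hw hΛxpos)
    have hzy' : d z y < Λy * ε := lt_of_le_of_lt hzy (mul_lt_mul_of_pos_left hz hΛypos)
    -- upper bound
    have hub : d w z ≤ d w x + d x y + d y z := by
      have h1 := htri w x z
      have h2 := htri x y z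
      linarith
    -- lower bound
    have hlb : d x y ≤ d x w + d w z + d z y := by
      have h1 := htri x w y
      have h2 := htri w z y
      linarith
    rw [Real.dist_eq, abs_sub_lt_iff]
    constructor <;> nlinarith [hnn x w, hnn y z, hnn w x, hnn z y]
  · -- Hausdorff
    letI : TopologicalSpace X := fwdTop d
    refine ⟨fun x y hxy => ?_⟩
    have hδ : 0 < d x y := by
      rcases lt_or_eq_of_le (hnn x y) with h | h
      · exact h
      · exact absurd ((heq x y).1 h.symm) hxy
    set Λ := Θ (d star y + 1) with hΛ
    have hΛpos : 0 < Λ := lt_of_lt_of_le one_pos (hΛ1 _)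
    set ε := min 1 (d x y / (1 + Λ)) with hε
    have hεpos : 0 < ε := lt_min one_pos (div_pos hδ (by linarith))
    refine ⟨fwdBall d x ε, fwdBall d y ε, fwdBall_open d x ε, fwdBall_open d y ε,
      show d x x < ε by rw [h0]; exact hεpos,
      show d y y < ε by rw [h0]; exact hεpos, ?_⟩
    rw [Set.disjoint_left]
    intro w hw1 hw2
    have hxw : d x w < ε := hw1
    have hyw : d y w < ε := hw2
    have hε1 : ε ≤ 1 := min_le_left _ _
    have hwy : d w y ≤ Λ * d y w := hrev y w (lt_of_lt_of_le hyw hε1)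
    have hwy' : d w y < Λ * ε := lt_of_le_of_lt hwy (mul_lt_mul_of_pos_left hyw hΛpos)
    have hεb : (1 + Λ) * ε ≤ d x y := by
      have : ε ≤ d x y / (1 + Λ) := min_le_right _ _
      calc (1 + Λ) * ε ≤ (1 + Λ) * (d x y / (1 + Λ)) :=
            mul_le_mul_of_nonneg_left this (by linarith)
        _ = d x y := by field_simp
    have := htri x w y
    linarith
end

section
/- In a pointed forward Θ-metric space, the topology induced by forward balls coincides with the topology induced by the symmetrized metric d̂(x,y) = (d(x,y)+d(y,x))/2. -/
open Set Filter Topology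

variable {X : Type*}

/-- Ball of the symmetrized metric `d̂(x,y) = (d(x,y)+d(y,x))/2`. -/
def symBall (d : X → X → ℝ) (x : X) (r : ℝ) : Set X := {y | (d x y + d y x) / 2 < r}

/-- The topology induced by the symmetrized metric. -/
def symTop (d : X → X → ℝ) : TopologicalSpace X :=
  TopologicalSpace.generateFrom {s | ∃ x r, s = symBall d x r}

lemma open_of_basis {S : Set (Set X)} {s : Set X}
    (h : ∀ y ∈ s, ∃ t ∈ S, y ∈ t ∧ t ⊆ s) :
    (TopologicalSpace.generateFrom S).IsOpen s := by
  have hs : s = ⋃₀ {t | t ∈ S ∧ t ⊆ s} := by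
    apply subset_antisymm
    · intro y hy
      obtain ⟨t, htS, hyt, hts⟩ := h y hy
      exact ⟨t, ⟨htS, hts⟩, hyt⟩
    · intro y hy
      obtain ⟨t, ⟨_, hts⟩, hyt⟩ := hy
      exact hts hyt
  rw [hs]
  exact TopologicalSpace.GenerateOpen.sUnion _ fun t ht =>
    TopologicalSpace.GenerateOpen.basic t ht.1

/-- In a pointed forward Θ-metric space, the forward topology coincides with
the topology induced by the symmetrized metric `d̂(x,y) = (d(x,y)+d(y,x))/2`. -/
theorem stmt1 (d : X → X → ℝ) (hd : IsIrrevMetric d) (star : X) (Θ : ℝ → ℝ)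
    (hΘ : PointedForwardTheta d star Θ) :
    fwdTop d = symTop d := by
  obtain ⟨hnn, hzero, htri⟩ := hd
  obtain ⟨hmono, hone, hrev⟩ := hΘ
  apply le_antisymm
  · -- fwdTop ≤ symTop : every sym generator is fwdTop-open (uses Θ)
    apply le_generateFrom
    rintro s ⟨x, r, rfl⟩
    apply open_of_basis
    intro y hy
    have hy' : (d x y + d y x) / 2 < r := hy
    set δ := r - (d x y + d y x) / 2 with hδdef
    have hδ : 0 < δ := by simp [hδdef]; linarith
    set R := d star y + 1 with hRdef
    have hR : 0 < R := by
      have := hnn star y; simp [hRdef]; linarith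
    have hΘR : 1 ≤ Θ R := hone R
    set ε := min 1 (δ / (1 + Θ R)) with hεdef
    have hε : 0 < ε := by
      apply lt_min one_pos
      apply div_pos hδ; linarith
    refine ⟨fwdBall d y ε, ⟨y, ε, rfl⟩, ?_, ?_⟩
    · show d y y < ε
      rw [(hzero y y).mpr rfl]; exact hε
    · intro z hz
      have hzball : d y z < ε := hz
      -- y and z are in fwdBall star R ⊆ closure
      have hyR : y ∈ fwdBall d star R := by
        show d star y < R; simp [hRdef]
      have hzR : z ∈ fwdBall d star R := by
        show d star z < R
        have h1 := htri star y z
        have h2 : ε ≤ 1 := min_le_left _ _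
        simp only [hRdef]
        linarith
      have hyc : y ∈ @closure X (fwdTop d) (fwdBall d star R) := by
        letI := fwdTop d; exact subset_closure hyR
      have hzc : z ∈ @closure X (fwdTop d) (fwdBall d star R) := by
        letI := fwdTop d; exact subset_closure hzR
      have hback : d z y ≤ Θ R * d y z := hrev R hR z hzc y hyc
      show (d x z + d z x) / 2 < r
      have h1 := htri x y z
      have h2 := htri z y x
      have h3 : ε ≤ δ / (1 + Θ R) := min_le_right _ _
      have h4 : (1 + Θ R) * ε ≤ δ := by
        rw [← le_div_iff₀' (by linarith : (0:ℝ) < 1 + Θ R)]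
        exact h3
      have h5 : d z y ≤ Θ R * ε := by
        calc d z y ≤ Θ R * d y z := hback
        _ ≤ Θ R * ε := by
              apply mul_le_mul_of_nonneg_left (le_of_lt hzball) (by linarith)
      have h4' : ε + Θ R * ε ≤ δ := by nlinarith [h4]
      have := hnn y z
      clear_value δ R ε
      linarith
  · -- symTop ≤ fwdTop : every fwd generator is symTop-open
    apply le_generateFrom
    rintro s ⟨x, r, rfl⟩
    apply open_of_basis
    intro y hy
    have hy' : d x y < r := hy
    refine ⟨symBall d y ((r - d x y) / 2), ⟨y, _, rfl⟩, ?_, ?_⟩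
    · show (d y y + d y y) / 2 < (r - d x y) / 2
      rw [(hzero y y).mpr rfl]; linarith
    · intro z hz
      have hz' : (d y z + d z y) / 2 < (r - d x y) / 2 := hz
      show d x z < r
      have h1 := htri x y z
      have := hnn z y
      linarith
end

section
/- A forward metric space (with Θ-bounded reversibility of forward balls around a base point) is complete (both forward and backward complete) if and only if it is backward complete. -/
open Set Filter Topology

variable {X : Type*}

/-- A forward Cauchy sequence. -/
def FwdCauchy (d : X → X → ℝ) (u : ℕ → X) : Prop :=
  ∀ ε > (0:ℝ), ∃ N : ℕ, ∀ i j : ℕ, N < i → i ≤ j → d (u i) (u j) < ε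

/-- A backward Cauchy sequence. -/
def BwdCauchy (d : X → X → ℝ) (u : ℕ → X) : Prop :=
  ∀ ε > (0:ℝ), ∃ N : ℕ, ∀ i j : ℕ, N < i → i ≤ j → d (u j) (u i) < ε

/-- Forward completeness: every forward Cauchy sequence converges in the forward topology. -/
def FwdComplete (d : X → X → ℝ) : Prop :=
  ∀ u : ℕ → X, FwdCauchy d u → ∃ x : X, Tendsto u atTop (@nhds X (fwdTop d) x)

/-- Backward completeness: every backward Cauchy sequence converges in the forward topology. -/
def BwdComplete (d : X → X → ℝ) : Prop :=
  ∀ u : ℕ → X, BwdCauchy d u → ∃ x : X, Tendsto u atTop (@nhds X (fwdTop d) x)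

/-- A forward metric space (a pointed forward Θ-metric space) is complete
(both forward and backward complete) if and only if it is backward complete. -/
theorem stmt2 (d : X → X → ℝ) (hd : IsIrrevMetric d) (star : X) (Θ : ℝ → ℝ)
    (hΘ : PointedForwardTheta d star Θ) :
    (FwdComplete d ∧ BwdComplete d) ↔ BwdComplete d := by
  obtain ⟨hpos, heq, htri⟩ := hd
  obtain ⟨hmono, hone, hrev⟩ := hΘ
  constructor
  · exact fun h => h.2
  · intro hb
    refine ⟨fun u hu => hb u ?_, hb⟩
    obtain ⟨N, hN⟩ := hu 1 one_pos
    set r := d star (u (N + 1)) + 1 with hr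
    have hr0 : 0 < r := by
      have := hpos star (u (N + 1)); linarith
    have hball : ∀ j, N + 1 ≤ j → u j ∈ fwdBall d star r := by
      intro j hj
      have h1 : d (u (N + 1)) (u j) < 1 := hN (N + 1) j (Nat.lt_succ_self N) hj
      have h2 := htri star (u (N + 1)) (u j)
      simp only [fwdBall, Set.mem_setOf_eq]
      linarith
    have hcl : ∀ j, N + 1 ≤ j → u j ∈ @closure X (fwdTop d) (fwdBall d star r) :=
      by
      letI := fwdTop d
      exact fun j hj => subset_closure (hball j hj)
    have hΘpos : 0 < Θ r := lt_of_lt_of_le one_pos (hone r)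
    intro ε hε
    obtain ⟨M, hM⟩ := hu (ε / Θ r) (div_pos hε hΘpos)
    refine ⟨max M N, fun i j hi hij => ?_⟩
    have hiN : N + 1 ≤ i := by
      have := le_max_right M N; omega
    have key := hrev r hr0 (u j) (hcl j (hiN.trans hij)) (u i) (hcl i hiN)
    have hd' : d (u i) (u j) < ε / Θ r := by
      have := le_max_left M N
      exact hM i j (by omega) hij
    calc d (u j) (u i) ≤ Θ r * d (u i) (u j) := key
      _ < Θ r * (ε / Θ r) := by
          exact mul_lt_mul_of_pos_left hd' hΘpos
      _ = ε := by field_simp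
end

section
/- For a forward metric space (X,d), the following are equivalent: (i) X is compact; (ii) X is sequentially compact; (iii) X is forward complete and forward totally bounded. -/
/-!
Each of the three conditions confines `X` to a forward ball about `star`: `d star` is upper
semicontinuous for the forward topology, so it is bounded on a compact space; a finite forward
`1`-net bounds it; and a sequence along which it tends to infinity has no forward convergent
subsequence. On such a ball `Θ` bounds the reversibility of `d` globally, so the symmetrization
`d x y + d y x` is a pseudometric inducing the forward topology, whose Cauchy sequences and finite
nets are the forward ones. The equivalences are then the classical ones for pseudometric spaces.
-/

open Set Filter Topology

variable {X : Type*}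

/-- Forward total boundedness: a finite forward ε-net exists for each ε > 0. -/
def FwdTotallyBounded (d : X → X → ℝ) : Prop :=
  ∀ ε > (0:ℝ), ∃ s : Finset X, ∀ x : X, ∃ a ∈ s, d a x < ε

/-- Sequential compactness in the forward topology. -/
def FwdSeqCompact (d : X → X → ℝ) : Prop :=
  ∀ u : ℕ → X, ∃ (x : X) (φ : ℕ → ℕ), StrictMono φ ∧
    Tendsto (u ∘ φ) atTop (@nhds X (fwdTop d) x)

theorem fwdBall_mono {d : X → X → ℝ} {x : X} {r s : ℝ} (h : r ≤ s) :
    fwdBall d x r ⊆ fwdBall d x s :=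
  fun _ hy => lt_of_lt_of_le hy h

namespace IsIrrevMetric

variable {d : X → X → ℝ}

theorem nonneg (hd : IsIrrevMetric d) (x y : X) : 0 ≤ d x y := hd.1 x y

theorem apply_self (hd : IsIrrevMetric d) (x : X) : d x x = 0 := (hd.2.1 x x).2 rfl

theorem triangle (hd : IsIrrevMetric d) (x y z : X) : d x z ≤ d x y + d y z := hd.2.2 x y z

theorem hasBasis_nhds_fwdTop (hd : IsIrrevMetric d) (x : X) :
    (@nhds X (fwdTop d) x).HasBasis (fun ε => 0 < ε) (fwdBall d x) := by
  have hopen : ∀ ε, IsOpen[fwdTop d] (fwdBall d x ε) := fun ε =>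
    TopologicalSpace.GenerateOpen.basic _ ⟨x, ε, rfl⟩
  convert hasBasis_biInf_principal' (p := fun ε : ℝ => 0 < ε) (s := fwdBall d x)
    (fun ε hε δ hδ => ⟨min ε δ, lt_min hε hδ, fwdBall_mono (min_le_left _ _),
      fwdBall_mono (min_le_right _ _)⟩) ⟨1, one_pos⟩
  refine le_antisymm (le_iInf₂ fun ε hε => le_principal_iff.2 ?_) ?_
  · exact @IsOpen.mem_nhds X (fwdTop d) _ _ (hopen ε) (by simp [fwdBall, hd.apply_self, hε])
  · rw [fwdTop, TopologicalSpace.nhds_generateFrom]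
    refine le_iInf₂ fun s ⟨hxs, z, r, hs⟩ => ?_
    subst hs
    refine iInf₂_le_of_le (r - d z x) (sub_pos.2 hxs) (principal_mono.2 fun y hy => ?_)
    have := hd.triangle z x y
    simp only [fwdBall, mem_ofPred_eq] at hy ⊢
    linarith

theorem tendsto_nhds_fwdTop_iff (hd : IsIrrevMetric d) {u : ℕ → X} {x : X} :
    Tendsto u atTop (@nhds X (fwdTop d) x) ↔ ∀ ε > 0, ∃ N, ∀ n ≥ N, d x (u n) < ε := by
  simp only [(hd.hasBasis_nhds_fwdTop x).tendsto_right_iff, eventually_atTop]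
  rfl

theorem upperSemicontinuous_fwdTop (hd : IsIrrevMetric d) (z : X) :
    @UpperSemicontinuous X ℝ (fwdTop d) _ (d z) := by
  intro x r hr
  rw [(hd.hasBasis_nhds_fwdTop x).eventually_iff]
  refine ⟨r - d z x, sub_pos.2 hr, fun y hy => ?_⟩
  have := hd.triangle z x y
  simp only [fwdBall, mem_ofPred_eq] at hy
  linarith

theorem exists_fwdBound_of_compactSpace (hd : IsIrrevMetric d) (star : X)
    (h : @CompactSpace X (fwdTop d)) : ∃ R, ∀ x, d star x < R := by
  let _ := fwdTop d
  obtain ⟨m, -, hm⟩ := ((hd.upperSemicontinuous_fwdTop star).upperSemicontinuousOn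
    univ).exists_isMaxOn ⟨star, mem_univ _⟩ isCompact_univ
  exact ⟨d star m + 1, fun x => (hm (mem_univ x)).trans_lt (lt_add_one _)⟩

theorem exists_fwdBound_of_fwdSeqCompact (hd : IsIrrevMetric d) (star : X)
    (h : FwdSeqCompact d) : ∃ R, ∀ x, d star x < R := by
  by_contra! hunbounded
  choose u hu using fun n : ℕ => hunbounded n
  obtain ⟨x, φ, hφ, hlim⟩ := h u
  obtain ⟨N, hN⟩ := hd.tendsto_nhds_fwdTop_iff.1 hlim 1 one_pos
  obtain ⟨k, hk⟩ := exists_nat_gt (d star x + 1)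
  have hfar : (k : ℝ) ≤ d star (u (φ (max N k))) :=
    le_trans (by exact_mod_cast (le_max_right N k).trans (hφ.id_le _)) (hu _)
  have hnear := hN (max N k) (le_max_left N k)
  have := hd.triangle star x (u (φ (max N k)))
  simp only [Function.comp_apply] at hnear
  linarith

theorem exists_fwdBound_of_fwdTotallyBounded (hd : IsIrrevMetric d) (star : X)
    (h : FwdTotallyBounded d) : ∃ R, ∀ x, d star x < R := by
  obtain ⟨s, hs⟩ := h 1 one_pos
  obtain ⟨M, hM⟩ := (s.image (d star)).exists_le
  refine ⟨M + 1, fun x => ?_⟩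
  obtain ⟨a, ha, hax⟩ := hs x
  have := hd.triangle star a x
  have := hM _ (Finset.mem_image_of_mem (d star) ha)
  linarith

end IsIrrevMetric

theorem PointedForwardTheta.reversible_of_fwdBound {d : X → X → ℝ} {star : X}
    {Θ : ℝ → ℝ} (hΘ : PointedForwardTheta d star Θ) (hd : IsIrrevMetric d) {R : ℝ}
    (hR : ∀ x, d star x < R) (x y : X) : d x y ≤ Θ R * d y x := by
  let _ := fwdTop d
  exact hΘ.2.2 R (hd.apply_self star ▸ hR star) x (subset_closure (hR x)) y
    (subset_closure (hR y))

theorem fwdSeqCompact_iff_seqCompactSpace {d : X → X → ℝ} :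
    FwdSeqCompact d ↔ @SeqCompactSpace X (fwdTop d) := by
  let _ := fwdTop d
  rw [seqCompactSpace_iff]
  exact ⟨fun h u _ => let ⟨x, hx⟩ := h u; ⟨x, mem_univ x, hx⟩,
    fun h u => let ⟨x, _, hx⟩ := h (fun n => mem_univ (u n)); ⟨x, hx⟩⟩

section Reversible

variable {d : X → X → ℝ} {C : ℝ}

theorem add_swap_le_of_reversible (hC : ∀ x y, d x y ≤ C * d y x) (x y : X) :
    d x y + d y x ≤ (1 + C) * d x y := by
  linarith [hC y x]

theorem IsIrrevMetric.hasBasis_nhds_fwdTop_add_swap (hd : IsIrrevMetric d) (hC0 : 0 ≤ C)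
    (hC : ∀ x y, d x y ≤ C * d y x) (x : X) :
    (@nhds X (fwdTop d) x).HasBasis (fun ε => 0 < ε) (fun ε => {y | d x y + d y x < ε}) := by
  refine (hd.hasBasis_nhds_fwdTop x).to_hasBasis (fun ε hε => ⟨ε, hε, fun y hy => ?_⟩)
    (fun ε hε => ⟨ε / (1 + C), by positivity, fun y hy => ?_⟩)
  · exact show d x y < ε by linarith [hd.nonneg y x, show d x y + d y x < ε from hy]
  · calc d x y + d y x ≤ (1 + C) * d x y := add_swap_le_of_reversible hC x y
      _ < (1 + C) * (ε / (1 + C)) := mul_lt_mul_of_pos_left hy (by positivity)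
      _ = ε := by field_simp

/-- The topology of this structure is definitionally `fwdTop d`. -/
noncomputable def symmetrizedPseudoMetricSpace (hd : IsIrrevMetric d) (hC0 : 0 ≤ C)
    (hC : ∀ x y, d x y ≤ C * d y x) : PseudoMetricSpace X :=
  let _ := fwdTop d
  .ofDistTopology (fun x y => d x y + d y x) (fun x => by simp [hd.apply_self])
    (fun x y => add_comm _ _)
    (fun x y z => by linarith [hd.triangle x y z, hd.triangle z y x])
    (fun s => by
      simp only [isOpen_iff_mem_nhds, (hd.hasBasis_nhds_fwdTop_add_swap hC0 hC _).mem_iff]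
      rfl)

theorem fwdComplete_iff_completeSpace (hd : IsIrrevMetric d) (hC0 : 0 ≤ C)
    (hC : ∀ x y, d x y ≤ C * d y x) :
    FwdComplete d ↔ @CompleteSpace X (symmetrizedPseudoMetricSpace hd hC0 hC).toUniformSpace := by
  let _ := symmetrizedPseudoMetricSpace hd hC0 hC
  have hdist : ∀ x y : X, dist x y = d x y + d y x := fun _ _ => rfl
  constructor
  · refine fun h => Metric.complete_of_cauchySeq_tendsto fun u hu => h u fun ε hε => ?_
    obtain ⟨N, hN⟩ := Metric.cauchySeq_iff.1 hu ε hε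
    refine ⟨N, fun i j hi hij => ?_⟩
    have := hN i hi.le j (hi.le.trans hij)
    linarith [hdist (u i) (u j), hd.nonneg (u j) (u i)]
  · refine fun _ u hu => cauchySeq_tendsto_of_complete (Metric.cauchySeq_iff.2 fun ε hε => ?_)
    obtain ⟨N, hN⟩ := hu (ε / (1 + C)) (by positivity)
    have hclose : ∀ i j, N < i → i ≤ j → dist (u i) (u j) < ε := fun i j hi hij =>
      calc dist (u i) (u j) ≤ (1 + C) * d (u i) (u j) := add_swap_le_of_reversible hC _ _
        _ < (1 + C) * (ε / (1 + C)) := mul_lt_mul_of_pos_left (hN i j hi hij) (by positivity)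
        _ = ε := by field_simp
    refine ⟨N + 1, fun m hm n hn => ?_⟩
    rcases le_total m n with hmn | hnm
    · exact hclose m n hm hmn
    · exact dist_comm (u m) (u n) ▸ hclose n m hn hnm

theorem fwdTotallyBounded_iff_totallyBounded (hd : IsIrrevMetric d) (hC0 : 0 ≤ C)
    (hC : ∀ x y, d x y ≤ C * d y x) :
    FwdTotallyBounded d ↔
      @TotallyBounded X (symmetrizedPseudoMetricSpace hd hC0 hC).toUniformSpace univ := by
  let _ := symmetrizedPseudoMetricSpace hd hC0 hC
  have hdist : ∀ x y : X, dist x y = d x y + d y x := fun _ _ => rfl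
  rw [Metric.totallyBounded_iff]
  constructor
  · intro h ε hε
    obtain ⟨s, hs⟩ := h (ε / (1 + C)) (by positivity)
    refine ⟨s, s.finite_toSet, fun x _ => ?_⟩
    obtain ⟨a, ha, hax⟩ := hs x
    refine mem_iUnion₂.2 ⟨a, ha, ?_⟩
    calc dist x a = d a x + d x a := by rw [hdist, add_comm]
      _ ≤ (1 + C) * d a x := add_swap_le_of_reversible hC a x
      _ < (1 + C) * (ε / (1 + C)) := mul_lt_mul_of_pos_left hax (by positivity)
      _ = ε := by field_simp
  · intro h ε hε
    obtain ⟨t, ht, hcover⟩ := h ε hε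
    refine ⟨ht.toFinset, fun x => ?_⟩
    obtain ⟨a, ha, hxa⟩ := mem_iUnion₂.1 (hcover (mem_univ x))
    refine ⟨a, ht.mem_toFinset.2 ha, ?_⟩
    linarith [hdist x a, hd.nonneg x a, Metric.mem_ball.1 hxa]

theorem IsIrrevMetric.tfae_of_reversible (hd : IsIrrevMetric d) (hC0 : 0 ≤ C)
    (hC : ∀ x y, d x y ≤ C * d y x) :
    [@CompactSpace X (fwdTop d), FwdSeqCompact d, FwdComplete d ∧ FwdTotallyBounded d].TFAE := by
  let _ := symmetrizedPseudoMetricSpace hd hC0 hC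
  have : @TopologicalSpace.PseudoMetrizableSpace X (fwdTop d) :=
    inferInstanceAs (TopologicalSpace.PseudoMetrizableSpace X)
  tfae_have 1 ↔ 2 :=
    compactSpace_iff_seqCompactSpace.trans fwdSeqCompact_iff_seqCompactSpace.symm
  tfae_have 1 ↔ 3 := by
    rw [fwdComplete_iff_completeSpace hd hC0 hC, fwdTotallyBounded_iff_totallyBounded hd hC0 hC,
      completeSpace_iff_isComplete_univ, and_comm, ← isCompact_iff_totallyBounded_isComplete,
      isCompact_univ_iff]
    exact Iff.rfl
  tfae_finish

end Reversible

/-- For a forward metric space `(X,d)` (a pointed forward Θ-metric space),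
the following are equivalent: (i) `X` is compact; (ii) `X` is sequentially compact; (iii) `X`
is forward complete and forward totally bounded. -/
theorem stmt4 (d : X → X → ℝ) (hd : IsIrrevMetric d) (star : X) (Θ : ℝ → ℝ)
    (hΘ : PointedForwardTheta d star Θ) :
    (@CompactSpace X (fwdTop d) ↔ FwdSeqCompact d) ∧
    (FwdSeqCompact d ↔ (FwdComplete d ∧ FwdTotallyBounded d)) := by
  have tfae (R : ℝ) (hR : ∀ x, d star x < R) :=
    hd.tfae_of_reversible (zero_le_one.trans (hΘ.2.1 R)) (hΘ.reversible_of_fwdBound hd hR)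
  have seq_of_compact (h : @CompactSpace X (fwdTop d)) : FwdSeqCompact d :=
    let ⟨R, hR⟩ := hd.exists_fwdBound_of_compactSpace star h
    ((tfae R hR).out 0 1).1 h
  have complete_of_seq (h : FwdSeqCompact d) : FwdComplete d ∧ FwdTotallyBounded d :=
    let ⟨R, hR⟩ := hd.exists_fwdBound_of_fwdSeqCompact star h
    ((tfae R hR).out 1 2).1 h
  have compact_of_complete (h : FwdComplete d ∧ FwdTotallyBounded d) :
      @CompactSpace X (fwdTop d) :=
    let ⟨R, hR⟩ := hd.exists_fwdBound_of_fwdTotallyBounded star h.2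
    ((tfae R hR).out 2 0).1 h
  exact ⟨⟨seq_of_compact, compact_of_complete ∘ complete_of_seq⟩,
    ⟨complete_of_seq, seq_of_compact ∘ compact_of_complete⟩⟩
end

section
/- A forward complete forward metric space is a forward geodesic space if and only if every pair of points x,y admits a midpoint, i.e. a point z with d(x,z)=d(z,y)=d(x,y)/2. -/
open Set Filter Topology

variable {X : Type*}

open scoped ENNReal NNReal


/-- The (directed) length of a path `γ` over the interval `[a,b]`: the supremum over
partitions `a = t₀ ≤ t₁ ≤ ⋯ ≤ t_N = b` of the sums `Σ d(γ(t_{i-1}), γ(t_i))`. -/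
noncomputable def pathLen (d : X → X → ℝ) (γ : ℝ → X) (a b : ℝ) : ℝ≥0∞ :=
  ⨆ (n : ℕ) (t : ℕ → ℝ) (_ : Monotone t) (_ : t 0 = a) (_ : t n = b)
    (_ : ∀ i, t i ∈ Set.Icc a b),
    ∑ i ∈ Finset.range n, ENNReal.ofReal (d (γ (t i)) (γ (t (i + 1))))

/-- A (constant-ratio) minimal geodesic on `[0,1]`: a continuous curve whose directed length
between any two parameter values equals the directed distance between the corresponding
points. -/
def IsMinGeodesic (d : X → X → ℝ) (γ : ℝ → X) : Prop :=
  @ContinuousOn ℝ X _ (fwdTop d) γ (Set.Icc 0 1) ∧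
  ∀ a b : ℝ, 0 ≤ a → a ≤ b → b ≤ 1 →
    pathLen d γ a b = ENNReal.ofReal (d (γ a) (γ b))

namespace Stmt7Aux

variable {X : Type*} {d : X → X → ℝ}

lemma d_self (hd : IsIrrevMetric d) (x : X) : d x x = 0 := (hd.2.1 x x).2 rfl

/-- Characterization of convergence in the forward topology. -/
lemma tendsto_fwdTop_iff (hd : IsIrrevMetric d) {α : Type*} {f : Filter α} {u : α → X} {z : X} :
    Tendsto u f (@nhds X (fwdTop d) z) ↔ ∀ ε > (0:ℝ), ∀ᶠ n in f, d z (u n) < ε := by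
  rw [fwdTop, TopologicalSpace.tendsto_nhds_generateFrom_iff]
  constructor
  · intro h ε hε
    exact h (fwdBall d z ε) ⟨z, ε, rfl⟩ (by simpa [fwdBall] using (d_self hd z ▸ hε))
  · rintro h S ⟨p, r, rfl⟩ hz
    have hz' : d p z < r := hz
    have := h (r - d p z) (by linarith)
    filter_upwards [this] with n hn
    have htri := hd.2.2 p z (u n)
    show d p (u n) < r
    linarith

/-- Dyadic subdivision construction: `dyad m x y n k` is the point at parameter `k / 2^n`. -/
noncomputable def dyad (m : X → X → X) (x y : X) : ℕ → ℕ → X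
  | 0, k => if k = 0 then x else y
  | n+1, k => if k % 2 = 0 then dyad m x y n (k / 2)
      else m (dyad m x y n (k / 2)) (dyad m x y n (k / 2 + 1))

lemma dyad_zero (m : X → X → X) (x y : X) : ∀ n, dyad m x y n 0 = x
  | 0 => by simp [dyad]
  | n+1 => by simpa [dyad] using dyad_zero m x y n

lemma dyad_top (m : X → X → X) (x y : X) : ∀ n, dyad m x y n (2^n) = y
  | 0 => by simp [dyad]
  | n+1 => by
      have h1 : (2^(n+1)) % 2 = 0 := by omega
      have h2 : (2^(n+1)) / 2 = 2^n := by omega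
      simpa [dyad, h1, h2] using dyad_top m x y n

lemma dyad_pow (m : X → X → X) (x y : X) (n : ℕ) (k : ℕ) :
    ∀ p, dyad m x y (n + p) (k * 2^p) = dyad m x y n k
  | 0 => by simp
  | p+1 => by
      have h1 : (k * 2^(p+1)) % 2 = 0 := by
        have : k * 2^(p+1) = (k * 2^p) * 2 := by ring
        omega
      have h2 : (k * 2^(p+1)) / 2 = k * 2^p := by
        have : k * 2^(p+1) = (k * 2^p) * 2 := by ring
        omega
      show dyad m x y ((n+p)+1) (k * 2^(p+1)) = dyad m x y n k
      simpa [dyad, h1, h2] using dyad_pow m x y n k p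

section Dyad

variable (hd : IsIrrevMetric d) {m : X → X → X} {x y : X}
  (hm : ∀ a b, d a (m a b) = d a b / 2 ∧ d (m a b) b = d a b / 2)

include hd hm

lemma dyad_step : ∀ n, ∀ k < 2^n, d (dyad m x y n k) (dyad m x y n (k+1)) = d x y / 2^n := by
  intro n
  induction n with
  | zero =>
    intro k hk
    interval_cases k
    simp [dyad]
  | succ n ih =>
    intro k hk
    rcases Nat.even_or_odd k with ⟨j, hj⟩ | ⟨j, hj⟩
    · subst hj
      have hj2 : j < 2^n := by
        have := hk; rw [pow_succ] at this; omega
      have e1 : dyad m x y (n+1) (j + j) = dyad m x y n j := by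
        have h1 : (j+j) % 2 = 0 := by omega
        have h2 : (j+j) / 2 = j := by omega
        simp [dyad, h1, h2]
      have e2 : dyad m x y (n+1) (j + j + 1) =
          m (dyad m x y n j) (dyad m x y n (j+1)) := by
        have h1 : (j+j+1) % 2 = 1 := by omega
        have h2 : (j+j+1) / 2 = j := by omega
        simp [dyad, h1, h2]
      rw [e1, e2, (hm _ _).1, ih j hj2, pow_succ, div_div]
    · subst hj
      have hj2 : j < 2^n := by
        have := hk; rw [pow_succ] at this; omega
      have e1 : dyad m x y (n+1) (2*j + 1) =
          m (dyad m x y n j) (dyad m x y n (j+1)) := by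
        have h1 : (2*j+1) % 2 = 1 := by omega
        have h2 : (2*j+1) / 2 = j := by omega
        simp [dyad, h1, h2]
      have e2 : dyad m x y (n+1) (2*j + 1 + 1) = dyad m x y n (j+1) := by
        have h1 : (2*j+1+1) % 2 = 0 := by omega
        have h2 : (2*j+1+1) / 2 = j+1 := by omega
        simp [dyad, h1, h2]
      rw [e1, e2, (hm _ _).2, ih j hj2, pow_succ, div_div]

lemma dyad_chain_le (n : ℕ) (k : ℕ) :
    ∀ p, k + p ≤ 2^n →
      d (dyad m x y n k) (dyad m x y n (k+p)) ≤ (p : ℝ) * (d x y / 2^n) := by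
  intro p
  induction p with
  | zero => intro _; simp [d_self hd]
  | succ p ih =>
    intro hp
    have h1 : d (dyad m x y n k) (dyad m x y n (k+p+1)) ≤
        d (dyad m x y n k) (dyad m x y n (k+p)) +
        d (dyad m x y n (k+p)) (dyad m x y n (k+p+1)) := hd.2.2 _ _ _
    have h2 := dyad_step hd hm (x := x) (y := y) n (k+p) (by omega)
    have h3 := ih (by omega)
    have : (k + (p+1)) = (k + p) + 1 := by omega
    rw [this]
    push_cast
    calc d (dyad m x y n k) (dyad m x y n (k+p+1)) ≤ _ := h1
    _ ≤ (p : ℝ) * (d x y / 2^n) + d x y / 2^n := by rw [h2]; linarith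
    _ = ((p : ℝ) + 1) * (d x y / 2^n) := by ring

lemma dyad_le (n : ℕ) {k l : ℕ} (hkl : k ≤ l) (hl : l ≤ 2^n) :
    d (dyad m x y n k) (dyad m x y n l) ≤ ((l : ℝ) - k) * (d x y / 2^n) := by
  obtain ⟨p, rfl⟩ := Nat.exists_eq_add_of_le hkl
  have := dyad_chain_le hd hm (x := x) (y := y) n k p (by omega)
  push_cast
  convert this using 2
  ring

lemma dyad_eq (n : ℕ) {k l : ℕ} (hkl : k ≤ l) (hl : l ≤ 2^n) :
    d (dyad m x y n k) (dyad m x y n l) = ((l : ℝ) - k) * (d x y / 2^n) := by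
  refine le_antisymm (dyad_le hd hm n hkl hl) ?_
  have h1 : d x y ≤ d x (dyad m x y n k) + d (dyad m x y n k) (dyad m x y n l) +
      d (dyad m x y n l) y := by
    have t1 := hd.2.2 x (dyad m x y n k) (dyad m x y n l)
    have t2 := hd.2.2 x (dyad m x y n l) y
    linarith
  have h2 : d x (dyad m x y n k) ≤ (k : ℝ) * (d x y / 2^n) := by
    have := dyad_le hd hm (x := x) (y := y) n (Nat.zero_le k) (le_trans hkl hl)
    rw [dyad_zero] at this
    simpa using this
  have h3 : d (dyad m x y n l) y ≤ ((2^n : ℝ) - l) * (d x y / 2^n) := by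
    have := dyad_le hd hm (x := x) (y := y) n hl (le_refl (2^n))
    rw [dyad_top] at this
    push_cast at this ⊢
    exact this
  have h4 : (0:ℝ) < 2^n := by positivity
  have h5 : d x y = (2^n : ℝ) * (d x y / 2^n) := by field_simp
  nlinarith [h1, h2, h3]

lemma dyad_dist_x (n : ℕ) {k : ℕ} (hk : k ≤ 2^n) :
    d x (dyad m x y n k) = (k : ℝ) * (d x y / 2^n) := by
  have := dyad_eq hd hm (x := x) (y := y) n (Nat.zero_le k) hk
  rw [dyad_zero] at this
  simpa using this

end Dyad

lemma kf_le_pow {t : ℝ} (ht : t ≤ 1) (n : ℕ) : ⌊t * 2^n⌋₊ ≤ 2^n := by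
  have h2 : (0:ℝ) < 2^n := by positivity
  calc ⌊t * 2^n⌋₊ ≤ ⌊((2^n : ℕ) : ℝ)⌋₊ := by
        apply Nat.floor_le_floor
        push_cast
        nlinarith
    _ = 2^n := Nat.floor_natCast _

lemma kf_tendsto {t : ℝ} (ht : 0 ≤ t) :
    Tendsto (fun n : ℕ => (⌊t * 2^n⌋₊ : ℝ) / 2^n) atTop (𝓝 t) := by
  have h0 : Tendsto (fun n : ℕ => t - (1/2:ℝ)^n) atTop (𝓝 (t - 0)) :=
    tendsto_const_nhds.sub (tendsto_pow_atTop_nhds_zero_of_lt_one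
      (by norm_num : (0:ℝ) ≤ 1/2) (by norm_num : (1/2:ℝ) < 1))
  rw [sub_zero] at h0
  refine tendsto_of_tendsto_of_tendsto_of_le_of_le h0 tendsto_const_nhds ?_ ?_
  · intro n
    show t - (1/2:ℝ)^n ≤ (⌊t * 2^n⌋₊ : ℝ) / 2^n
    have h2 : (0:ℝ) < 2^n := by positivity
    have h3 : t * 2^n < ⌊t * 2^n⌋₊ + 1 := Nat.lt_floor_add_one _
    have h4 : ((1:ℝ)/2)^n * 2^n = 1 := by
      rw [← mul_pow]; norm_num
    exact (le_div_iff₀ h2).2 (by nlinarith)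
  · intro n
    show (⌊t * 2^n⌋₊ : ℝ) / 2^n ≤ t
    have h2 : (0:ℝ) < 2^n := by positivity
    rw [div_le_iff₀ h2]
    exact Nat.floor_le (by positivity)

section Dyad2

variable (hd : IsIrrevMetric d) {m : X → X → X} {x y : X}
  (hm : ∀ a b, d a (m a b) = d a b / 2 ∧ d (m a b) b = d a b / 2)

include hd hm

lemma dyad_mem_ball (star : X) (n : ℕ) {k : ℕ} (hk : k ≤ 2^n) :
    dyad m x y n k ∈ fwdBall d star (d star x + d x y + 1) := by
  have h1 := dyad_dist_x hd hm (x := x) (y := y) n hk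
  have h2 := hd.2.2 star x (dyad m x y n k)
  have hL := hd.1 x y
  have h5 : (0:ℝ) < 2^n := by positivity
  have h4 : (k:ℝ) ≤ 2^n := by exact_mod_cast hk
  have h3 : (k:ℝ) * (d x y / 2^n) ≤ d x y := by
    calc (k:ℝ) * (d x y / 2^n) ≤ 2^n * (d x y / 2^n) :=
          mul_le_mul_of_nonneg_right h4 (div_nonneg hL h5.le)
      _ = d x y := by field_simp
  show d star (dyad m x y n k) < d star x + d x y + 1
  linarith

lemma exists_lim (star : X) (Θ : ℝ → ℝ) (hΘ : PointedForwardTheta d star Θ)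
    (hcompl : FwdComplete d) {t : ℝ} (ht0 : 0 ≤ t) (ht1 : t ≤ 1) :
    ∃ z : X, Tendsto (fun n => d z (dyad m x y n ⌊t * 2^n⌋₊)) atTop (𝓝 0) ∧
      Tendsto (fun n => d (dyad m x y n ⌊t * 2^n⌋₊) z) atTop (𝓝 0) := by
  have hL : 0 ≤ d x y := hd.1 x y
  have hbound : ∀ i j : ℕ, i ≤ j →
      d (dyad m x y i ⌊t * 2^i⌋₊) (dyad m x y j ⌊t * 2^j⌋₊) ≤ d x y / 2^i := by
    intro i j hij
    have hrw : dyad m x y i ⌊t * 2^i⌋₊ = dyad m x y j (⌊t * 2^i⌋₊ * 2^(j-i)) := by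
      have h := dyad_pow m x y i ⌊t * 2^i⌋₊ (j - i)
      rw [show i + (j - i) = j from by omega] at h
      exact h.symm
    have h2 : (0:ℝ) < 2^j := by positivity
    have h2i : (0:ℝ) < 2^i := by positivity
    have h3 : (0:ℝ) < 2^(j-i) := by positivity
    have h6 : (2:ℝ)^i * 2^(j-i) = 2^j := by
      rw [← pow_add]; congr 1; omega
    have hklel : ⌊t * 2^i⌋₊ * 2^(j-i) ≤ ⌊t * 2^j⌋₊ := by
      apply Nat.le_floor
      push_cast
      have h1 : (⌊t * 2^i⌋₊ : ℝ) ≤ t * 2^i := Nat.floor_le (by positivity)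
      nlinarith
    have hle : ⌊t * 2^j⌋₊ ≤ 2^j := kf_le_pow ht1 j
    have heq := dyad_eq hd hm (x := x) (y := y) j hklel hle
    rw [hrw, heq]
    have h4 : (⌊t * 2^j⌋₊ : ℝ) ≤ t * 2^j := Nat.floor_le (by positivity)
    have h5 : t * 2^i < ⌊t * 2^i⌋₊ + 1 := Nat.lt_floor_add_one _
    have h7 : ((⌊t * 2^j⌋₊ : ℝ) - ((⌊t * 2^i⌋₊ * 2^(j-i) : ℕ) : ℝ)) ≤ 2^(j-i) := by
      push_cast
      nlinarith
    have h8 : (0:ℝ) ≤ d x y / 2^j := div_nonneg hL h2.le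
    calc ((⌊t * 2^j⌋₊ : ℝ) - ((⌊t * 2^i⌋₊ * 2^(j-i) : ℕ) : ℝ)) * (d x y / 2^j)
        ≤ 2^(j-i) * (d x y / 2^j) := mul_le_mul_of_nonneg_right h7 h8
      _ = d x y / 2^i := by
          rw [← h6]; field_simp
  have hcau : FwdCauchy d (fun n => dyad m x y n ⌊t * 2^n⌋₊) := by
    intro ε hε
    have hL1 : (0:ℝ) < d x y + 1 := by linarith
    obtain ⟨N, hN⟩ := exists_pow_lt_of_lt_one (div_pos hε hL1) (by norm_num : (1:ℝ)/2 < 1)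
    refine ⟨N, fun i j hNi hij => ?_⟩
    have h1 := hbound i j hij
    have h2N : (0:ℝ) < 2^N := by positivity
    have h2i : (0:ℝ) < 2^i := by positivity
    have h2 : d x y / 2^i ≤ d x y / 2^N :=
      div_le_div_of_nonneg_left hL h2N (pow_le_pow_right₀ (by norm_num) hNi.le)
    have h4 : ((1:ℝ)/2)^N = 1/2^N := by
      rw [div_pow]; norm_num
    have h5 : d x y / 2^N < ε := by
      rw [h4] at hN
      have h6 : d x y * (1/2^N) ≤ (d x y + 1) * (1/2^N) := by
        apply mul_le_mul_of_nonneg_right (by linarith) (by positivity)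
      have h7 : (d x y + 1) * (1/2^N) < (d x y + 1) * (ε/(d x y + 1)) :=
        mul_lt_mul_of_pos_left hN hL1
      have h8 : (d x y + 1) * (ε/(d x y + 1)) = ε := by field_simp
      have h9 : d x y / 2^N = d x y * (1/2^N) := by ring
      linarith
    exact lt_of_le_of_lt (h1.trans h2) h5
  obtain ⟨z, hz⟩ := hcompl _ hcau
  have hfwd : Tendsto (fun n => d z (dyad m x y n ⌊t * 2^n⌋₊)) atTop (𝓝 0) := by
    rw [Metric.tendsto_atTop]
    intro ε hε
    have := (tendsto_fwdTop_iff hd).1 hz ε hε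
    rw [eventually_atTop] at this
    obtain ⟨N, hN⟩ := this
    refine ⟨N, fun n hn => ?_⟩
    rw [Real.dist_eq, sub_zero, abs_of_nonneg (hd.1 _ _)]
    exact hN n hn
  have hR : (0:ℝ) < d star x + d x y + 1 := by
    have := hd.1 star x; linarith
  letI : TopologicalSpace X := fwdTop d
  have hmem : ∀ n, dyad m x y n ⌊t * 2^n⌋₊ ∈ fwdBall d star (d star x + d x y + 1) :=
    fun n => dyad_mem_ball hd hm star n (kf_le_pow ht1 n)
  have hzc : z ∈ closure (fwdBall d star (d star x + d x y + 1)) :=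
    mem_closure_of_tendsto hz (Filter.Eventually.of_forall hmem)
  have hback : ∀ n, d (dyad m x y n ⌊t * 2^n⌋₊) z ≤
      Θ (d star x + d x y + 1) * d z (dyad m x y n ⌊t * 2^n⌋₊) :=
    fun n => hΘ.2.2 _ hR _ (subset_closure (hmem n)) _ hzc
  refine ⟨z, hfwd, squeeze_zero (fun n => hd.1 _ _) hback ?_⟩
  simpa using hfwd.const_mul (Θ (d star x + d x y + 1))

lemma lim_dist {s t : ℝ} {p q : X}
    (hs0 : 0 ≤ s) (hst : s ≤ t) (ht1 : t ≤ 1)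
    (hp1 : Tendsto (fun n => d p (dyad m x y n ⌊s * 2^n⌋₊)) atTop (𝓝 0))
    (hp2 : Tendsto (fun n => d (dyad m x y n ⌊s * 2^n⌋₊) p) atTop (𝓝 0))
    (hq1 : Tendsto (fun n => d q (dyad m x y n ⌊t * 2^n⌋₊)) atTop (𝓝 0))
    (hq2 : Tendsto (fun n => d (dyad m x y n ⌊t * 2^n⌋₊) q) atTop (𝓝 0)) :
    d p q = (t - s) * d x y := by
  have ht0 : 0 ≤ t := le_trans hs0 hst
  have hD : ∀ n : ℕ, d (dyad m x y n ⌊s * 2^n⌋₊) (dyad m x y n ⌊t * 2^n⌋₊)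
      = ((⌊t * 2^n⌋₊ : ℝ) - (⌊s * 2^n⌋₊ : ℝ)) * (d x y / 2^n) := by
    intro n
    have h2 : (0:ℝ) < 2^n := by positivity
    exact dyad_eq hd hm n
      (Nat.floor_le_floor (by nlinarith : s * 2^n ≤ t * 2^n)) (kf_le_pow ht1 n)
  have hDt : Tendsto (fun n : ℕ =>
      d (dyad m x y n ⌊s * 2^n⌋₊) (dyad m x y n ⌊t * 2^n⌋₊)) atTop (𝓝 ((t - s) * d x y)) := by
    have h1 := ((kf_tendsto ht0).sub (kf_tendsto hs0)).mul_const (d x y)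
    refine h1.congr fun n => ?_
    rw [hD n]; ring
  apply le_antisymm
  · have hA : Tendsto (fun n => d p (dyad m x y n ⌊s * 2^n⌋₊) +
        d (dyad m x y n ⌊s * 2^n⌋₊) (dyad m x y n ⌊t * 2^n⌋₊) +
        d (dyad m x y n ⌊t * 2^n⌋₊) q) atTop (𝓝 ((t - s) * d x y)) := by
      simpa using (hp1.add hDt).add hq2
    refine ge_of_tendsto' hA fun n => ?_
    have t1 := hd.2.2 p (dyad m x y n ⌊s * 2^n⌋₊) q
    have t2 := hd.2.2 (dyad m x y n ⌊s * 2^n⌋₊) (dyad m x y n ⌊t * 2^n⌋₊) q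
    linarith
  · have hB : Tendsto (fun n =>
        d (dyad m x y n ⌊s * 2^n⌋₊) (dyad m x y n ⌊t * 2^n⌋₊) -
        d (dyad m x y n ⌊s * 2^n⌋₊) p - d q (dyad m x y n ⌊t * 2^n⌋₊)) atTop
        (𝓝 ((t - s) * d x y)) := by
      simpa using (hDt.sub hp2).sub hq1
    refine le_of_tendsto' hB fun n => ?_
    have t1 := hd.2.2 (dyad m x y n ⌊s * 2^n⌋₊) p (dyad m x y n ⌊t * 2^n⌋₊)
    have t2 := hd.2.2 p q (dyad m x y n ⌊t * 2^n⌋₊)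
    linarith

end Dyad2

/-- If the distances along `γ` are linear in the parameter, every partition sum telescopes and
the directed length equals the distance. -/
lemma pathLen_eq_of_linear {γ : ℝ → X} {L : ℝ} (hL : 0 ≤ L)
    (hγ : ∀ s t : ℝ, 0 ≤ s → s ≤ t → t ≤ 1 → d (γ s) (γ t) = (t - s) * L)
    {a b : ℝ} (ha : 0 ≤ a) (hab : a ≤ b) (hb : b ≤ 1) :
    pathLen d γ a b = ENNReal.ofReal (d (γ a) (γ b)) := by
  have key : ∀ (t : ℕ → ℝ), Monotone t → (∀ i, t i ∈ Set.Icc a b) → ∀ n,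
      ∑ i ∈ Finset.range n, ENNReal.ofReal (d (γ (t i)) (γ (t (i+1)))) =
        ENNReal.ofReal ((t n - t 0) * L) := by
    intro t ht hmem n
    induction n with
    | zero => simp
    | succ n ih =>
      rw [Finset.sum_range_succ, ih]
      have h0 : 0 ≤ t n := le_trans ha (hmem n).1
      have h1 : t n ≤ t (n+1) := ht (Nat.le_succ n)
      have h2 : t (n+1) ≤ 1 := le_trans (hmem (n+1)).2 hb
      rw [hγ (t n) (t (n+1)) h0 h1 h2, ← ENNReal.ofReal_add
        (mul_nonneg (sub_nonneg.2 (ht (Nat.zero_le n))) hL)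
        (mul_nonneg (sub_nonneg.2 h1) hL)]
      congr 1
      ring
  apply le_antisymm
  · refine iSup_le fun n => iSup_le fun t => iSup_le fun ht => iSup_le fun h0 =>
      iSup_le fun hn => iSup_le fun hmem => ?_
    rw [key t ht hmem n, h0, hn, hγ a b ha hab hb]
  · set t : ℕ → ℝ := fun i => if i = 0 then a else b with htdef
    have ht : Monotone t := by
      intro i j hij
      by_cases hi : i = 0
      · subst hi
        by_cases hj : j = 0 <;> simp [htdef, hj, hab]
      · have hj : j ≠ 0 := by omega
        simp [htdef, hi, hj]
    have h0 : t 0 = a := by simp [htdef]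
    have h1 : t 1 = b := by simp [htdef]
    have hmem : ∀ i, t i ∈ Set.Icc a b := by
      intro i
      by_cases hi : i = 0 <;> simp [htdef, hi, hab, le_refl]
    calc ENNReal.ofReal (d (γ a) (γ b))
        = ∑ i ∈ Finset.range 1, ENNReal.ofReal (d (γ (t i)) (γ (t (i+1)))) := by
          simp [Finset.sum_range_one, h0, h1]
      _ ≤ pathLen d γ a b := by
          unfold pathLen
          refine le_iSup_of_le 1 (le_iSup_of_le t (le_iSup_of_le ht
            (le_iSup_of_le h0 (le_iSup_of_le h1 (le_iSup_of_le hmem le_rfl)))))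

/-- If distances along `γ` are linear in the parameter and the curve stays in a set of
bounded reversibility, then `γ` is continuous on `[0,1]` in the forward topology. -/
lemma continuousOn_of_linear (hd : IsIrrevMetric d) {star : X} {Θ : ℝ → ℝ}
    (hΘ : PointedForwardTheta d star Θ) {γ : ℝ → X} {L R : ℝ} (hL : 0 ≤ L) (hR : 0 < R)
    (hγ : ∀ s t : ℝ, 0 ≤ s → s ≤ t → t ≤ 1 → d (γ s) (γ t) = (t - s) * L)
    (hclos : ∀ t ∈ Set.Icc (0:ℝ) 1, γ t ∈ @closure X (fwdTop d) (fwdBall d star R)) :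
    @ContinuousOn ℝ X _ (fwdTop d) γ (Set.Icc 0 1) := by
  intro t htI
  show Tendsto γ (𝓝[Set.Icc (0:ℝ) 1] t) (@nhds X (fwdTop d) (γ t))
  rw [tendsto_fwdTop_iff hd]
  intro ε hε
  have hΘ1 : 1 ≤ Θ R := hΘ.2.1 R
  have hΘ0 : 0 < Θ R := lt_of_lt_of_le one_pos hΘ1
  have hδpos : 0 < ε / (Θ R * (L + 1)) := by
    apply div_pos hε
    nlinarith
  have hsub : Metric.ball t (ε / (Θ R * (L + 1))) ∩ Set.Icc 0 1 ⊆
      {s | d (γ t) (γ s) < ε} := by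
    rintro s ⟨hball, hsI⟩
    rw [Metric.mem_ball, Real.dist_eq] at hball
    have he : (ε / (Θ R * (L + 1))) * (Θ R * (L + 1)) = ε := by
      field_simp
    rcases le_total t s with h | h
    · have heq := hγ t s htI.1 h hsI.2
      have habs : s - t < ε / (Θ R * (L + 1)) := lt_of_le_of_lt (le_abs_self _) hball
      show d (γ t) (γ s) < ε
      rw [heq]
      have h1 : (s - t) * (L + 1) < (ε / (Θ R * (L + 1))) * (L + 1) :=
        mul_lt_mul_of_pos_right habs (by linarith)
      have h2 : (ε / (Θ R * (L + 1))) * (L + 1) ≤ (ε / (Θ R * (L + 1))) * (Θ R * (L + 1)) := by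
        apply mul_le_mul_of_nonneg_left ?_ hδpos.le
        nlinarith
      have h3 : (s - t) * L ≤ (s - t) * (L + 1) := by nlinarith [sub_nonneg.2 h]
      linarith
    · have heq := hγ s t hsI.1 h htI.2
      have hsym := hΘ.2.2 R hR (γ t) (hclos t htI) (γ s) (hclos s hsI)
      have habs : t - s < ε / (Θ R * (L + 1)) := by
        rw [abs_sub_comm] at hball
        exact lt_of_le_of_lt (le_abs_self _) hball
      show d (γ t) (γ s) < ε
      rw [heq] at hsym
      have h3 : (t - s) * L ≤ (t - s) * (L + 1) := by nlinarith [sub_nonneg.2 h]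
      have h4 : Θ R * ((t - s) * L) ≤ Θ R * ((t - s) * (L + 1)) :=
        mul_le_mul_of_nonneg_left h3 hΘ0.le
      have h5 : (t - s) * (L + 1) < (ε / (Θ R * (L + 1))) * (L + 1) :=
        mul_lt_mul_of_pos_right habs (by linarith)
      have h6 : Θ R * ((t - s) * (L + 1)) < Θ R * ((ε / (Θ R * (L + 1))) * (L + 1)) :=
        mul_lt_mul_of_pos_left h5 hΘ0
      have hL1 : (L:ℝ) + 1 ≠ 0 := by positivity
      have h7 : Θ R * ((ε / (Θ R * (L + 1))) * (L + 1)) = ε := by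
        field_simp
      linarith
  exact mem_nhdsWithin.2 ⟨Metric.ball t (ε / (Θ R * (L + 1))), Metric.isOpen_ball,
    Metric.mem_ball_self hδpos, hsub⟩

section Dyad3

variable (hd : IsIrrevMetric d) {m : X → X → X} {x y : X}
  (hm : ∀ a b, d a (m a b) = d a b / 2 ∧ d (m a b) b = d a b / 2)

include hd hm

/-- Main construction: from midpoints (encoded via `m`) to a minimal geodesic. -/
lemma exists_geodesic (star : X) (Θ : ℝ → ℝ) (hΘ : PointedForwardTheta d star Θ)
    (hcompl : FwdComplete d) :
    ∃ γ : ℝ → X, IsMinGeodesic d γ ∧ γ 0 = x ∧ γ 1 = y := by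
  classical
  have hL : 0 ≤ d x y := hd.1 x y
  have hex : ∀ t : ℝ, ∃ z : X, 0 ≤ t → t ≤ 1 →
      Tendsto (fun n => d z (dyad m x y n ⌊t * 2^n⌋₊)) atTop (𝓝 0) ∧
      Tendsto (fun n => d (dyad m x y n ⌊t * 2^n⌋₊) z) atTop (𝓝 0) := by
    intro t
    by_cases h : 0 ≤ t ∧ t ≤ 1
    · obtain ⟨z, h1, h2⟩ := exists_lim hd hm star Θ hΘ hcompl h.1 h.2
      exact ⟨z, fun _ _ => ⟨h1, h2⟩⟩
    · exact ⟨x, fun h0 h1 => absurd ⟨h0, h1⟩ h⟩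
  choose z hz using hex
  set γ : ℝ → X := fun t => if t ≤ 0 then x else if 1 ≤ t then y else z t with hγdef
  have hγ0 : γ 0 = x := by simp [hγdef]
  have hγ1 : γ 1 = y := by norm_num [hγdef]
  have hlim : ∀ t : ℝ, 0 ≤ t → t ≤ 1 →
      Tendsto (fun n => d (γ t) (dyad m x y n ⌊t * 2^n⌋₊)) atTop (𝓝 0) ∧
      Tendsto (fun n => d (dyad m x y n ⌊t * 2^n⌋₊) (γ t)) atTop (𝓝 0) := by
    intro t h0 h1
    by_cases ht0 : t ≤ 0
    · have ht : t = 0 := le_antisymm ht0 h0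
      subst ht
      have hdy : ∀ n : ℕ, dyad m x y n ⌊(0:ℝ) * 2^n⌋₊ = x := by
        intro n
        norm_num [dyad_zero]
      constructor <;>
        exact Tendsto.congr (fun n => by rw [hγ0, hdy n, d_self hd]) tendsto_const_nhds
    · by_cases ht1 : 1 ≤ t
      · have ht : t = 1 := le_antisymm h1 ht1
        subst ht
        have hdy : ∀ n : ℕ, dyad m x y n ⌊(1:ℝ) * 2^n⌋₊ = y := by
          intro n
          have : ⌊(1:ℝ) * 2^n⌋₊ = 2^n := by
            rw [one_mul, show ((2:ℝ)^n) = ((2^n : ℕ) : ℝ) by push_cast; ring,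
              Nat.floor_natCast]
          rw [this, dyad_top]
        constructor <;>
          exact Tendsto.congr (fun n => by rw [hγ1, hdy n, d_self hd]) tendsto_const_nhds
      · have : γ t = z t := by simp [hγdef, ht0, ht1]
        rw [this]
        exact hz t h0 h1
  have hdist : ∀ s t : ℝ, 0 ≤ s → s ≤ t → t ≤ 1 → d (γ s) (γ t) = (t - s) * d x y := by
    intro s t h0 hst h1
    obtain ⟨hp1, hp2⟩ := hlim s h0 (hst.trans h1)
    obtain ⟨hq1, hq2⟩ := hlim t (h0.trans hst) h1
    exact lim_dist hd hm h0 hst h1 hp1 hp2 hq1 hq2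
  have hR : (0:ℝ) < d star x + d x y + 1 := by
    have := hd.1 star x
    linarith
  have hclos : ∀ t ∈ Set.Icc (0:ℝ) 1,
      γ t ∈ @closure X (fwdTop d) (fwdBall d star (d star x + d x y + 1)) := by
    letI : TopologicalSpace X := fwdTop d
    intro t ht
    have h := (hlim t ht.1 ht.2).1
    have htend : Tendsto (fun n => dyad m x y n ⌊t * 2^n⌋₊) atTop
        (@nhds X (fwdTop d) (γ t)) := by
      rw [tendsto_fwdTop_iff hd]
      intro ε hε
      exact h.eventually_lt_const hε
    exact mem_closure_of_tendsto htend (Filter.Eventually.of_forall fun n =>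
      dyad_mem_ball hd hm star n (kf_le_pow ht.2 n))
  refine ⟨γ, ⟨continuousOn_of_linear hd hΘ hL hR hdist hclos, ?_⟩, hγ0, hγ1⟩
  intro a b ha hab hb
  exact pathLen_eq_of_linear hL hdist ha hab hb

end Dyad3

/-- From a minimal geodesic to a midpoint. -/
lemma midpoint_of_geodesic (hd : IsIrrevMetric d) {star : X} {Θ : ℝ → ℝ}
    (hΘ : PointedForwardTheta d star Θ) {x y : X} {γ : ℝ → X}
    (hγ : IsMinGeodesic d γ) (hγ0 : γ 0 = x) (hγ1 : γ 1 = y) :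
    ∃ z : X, d x z = d x y / 2 ∧ d z y = d x y / 2 := by
  obtain ⟨hcont, hlen⟩ := hγ
  -- additivity of distances along the geodesic
  have hadd : ∀ a b c : ℝ, 0 ≤ a → a ≤ b → b ≤ c → c ≤ 1 →
      d (γ a) (γ b) + d (γ b) (γ c) = d (γ a) (γ c) := by
    intro a b c ha hab hbc hc1
    refine le_antisymm ?_ (hd.2.2 (γ a) (γ b) (γ c))
    have hkey : ENNReal.ofReal (d (γ a) (γ b)) + ENNReal.ofReal (d (γ b) (γ c)) ≤
        pathLen d γ a c := by
      set t : ℕ → ℝ := fun i => if i = 0 then a else if i = 1 then b else c with htdef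
      have ht : Monotone t := by
        intro i j hij
        by_cases hi0 : i = 0
        · subst hi0
          by_cases hj0 : j = 0
          · simp [hj0]
          · by_cases hj1 : j = 1 <;> simp [htdef, hj0, hj1, hab, hab.trans hbc]
        · by_cases hi1 : i = 1
          · subst hi1
            have hj0 : j ≠ 0 := by omega
            by_cases hj1 : j = 1 <;> simp [htdef, hj0, hj1, hbc]
          · have hj0 : j ≠ 0 := by omega
            have hj1 : j ≠ 1 := by omega
            simp [htdef, hi0, hi1, hj0, hj1]
      have h0 : t 0 = a := by simp [htdef]
      have h2 : t 2 = c := by simp [htdef]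
      have hmem : ∀ i, t i ∈ Set.Icc a c := by
        intro i
        by_cases hi0 : i = 0
        · simp [htdef, hi0, hab.trans hbc]
        · by_cases hi1 : i = 1 <;>
            simp [htdef, hi0, hi1, hab, hbc, hab.trans hbc, le_refl]
      have hsum : ∑ i ∈ Finset.range 2, ENNReal.ofReal (d (γ (t i)) (γ (t (i+1)))) =
          ENNReal.ofReal (d (γ a) (γ b)) + ENNReal.ofReal (d (γ b) (γ c)) := by
        rw [Finset.sum_range_succ, Finset.sum_range_one]
        have e0 : t 0 = a := h0
        have e1 : t 1 = b := by simp [htdef]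
        have e2 : t 2 = c := h2
        rw [e0, e1, e2]
      rw [← hsum]
      unfold pathLen
      exact le_iSup_of_le 2 (le_iSup_of_le t (le_iSup_of_le ht
        (le_iSup_of_le h0 (le_iSup_of_le h2 (le_iSup_of_le hmem le_rfl)))))
    rw [hlen a c ha (hab.trans hbc) hc1, ← ENNReal.ofReal_add (hd.1 _ _) (hd.1 _ _)] at hkey
    exact (ENNReal.ofReal_le_ofReal_iff (hd.1 _ _)).1 hkey
  have hf : ∀ a b : ℝ, 0 ≤ a → a ≤ b → b ≤ 1 →
      d x (γ b) = d x (γ a) + d (γ a) (γ b) := by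
    intro a b ha hab hb
    have := hadd 0 a b le_rfl ha hab hb
    rw [hγ0] at this
    linarith
  have hfle : ∀ t ∈ Set.Icc (0:ℝ) 1, d x (γ t) ≤ d x y := by
    intro t ht
    have h1 := hf t 1 ht.1 ht.2 le_rfl
    rw [hγ1] at h1
    have := hd.1 (γ t) y
    linarith
  have hR : (0:ℝ) < d star x + d x y + 1 := by
    have h1 := hd.1 star x
    have h2 := hd.1 x y
    linarith
  have hclos : ∀ t ∈ Set.Icc (0:ℝ) 1,
      γ t ∈ @closure X (fwdTop d) (fwdBall d star (d star x + d x y + 1)) := by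
    letI : TopologicalSpace X := fwdTop d
    intro t ht
    apply subset_closure
    show d star (γ t) < d star x + d x y + 1
    have h1 := hd.2.2 star x (γ t)
    have h2 := hfle t ht
    linarith
  have hΘ1 : 1 ≤ Θ (d star x + d x y + 1) := hΘ.2.1 _
  have hΘ0 : 0 < Θ (d star x + d x y + 1) := lt_of_lt_of_le one_pos hΘ1
  -- continuity of t ↦ d x (γ t)
  have hcf : ContinuousOn (fun t => d x (γ t)) (Set.Icc (0:ℝ) 1) := by
    intro t ht
    rw [ContinuousWithinAt, Metric.tendsto_nhds]
    intro ε hε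
    have hεΘ : 0 < ε / Θ (d star x + d x y + 1) := div_pos hε hΘ0
    have hev : ∀ᶠ s in 𝓝[Set.Icc (0:ℝ) 1] t,
        d (γ t) (γ s) < ε / Θ (d star x + d x y + 1) :=
      (tendsto_fwdTop_iff hd).1 (hcont t ht) _ hεΘ
    filter_upwards [hev, eventually_mem_nhdsWithin] with s hs hsI
    rw [Real.dist_eq]
    have hdivle : ε / Θ (d star x + d x y + 1) ≤ ε := by
      rw [div_le_iff₀ hΘ0]
      nlinarith
    rcases le_total t s with h | h
    · have heq := hf t s ht.1 h hsI.2
      rw [abs_of_nonneg (by linarith [hd.1 (γ t) (γ s)])]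
      linarith
    · have heq := hf s t hsI.1 h ht.2
      have hsym := hΘ.2.2 _ hR (γ s) (hclos s hsI) (γ t) (hclos t ht)
      rw [abs_sub_comm, abs_of_nonneg (by linarith [hd.1 (γ s) (γ t)])]
      have hmul : Θ (d star x + d x y + 1) * d (γ t) (γ s) <
          Θ (d star x + d x y + 1) * (ε / Θ (d star x + d x y + 1)) :=
        mul_lt_mul_of_pos_left hs hΘ0
      have hcancel : Θ (d star x + d x y + 1) * (ε / Θ (d star x + d x y + 1)) = ε := by
        field_simp
      linarith
  have hmem : d x y / 2 ∈ Set.Icc ((fun t => d x (γ t)) 0) ((fun t => d x (γ t)) 1) := by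
    have h2 := hd.1 x y
    simp only [hγ0, hγ1, d_self hd]
    constructor <;> linarith
  obtain ⟨t₀, ht₀, hft₀⟩ := intermediate_value_Icc (by norm_num : (0:ℝ) ≤ 1) hcf hmem
  refine ⟨γ t₀, hft₀, ?_⟩
  have h1 := hf t₀ 1 ht₀.1 ht₀.2 le_rfl
  rw [hγ1] at h1
  have hft : d x (γ t₀) = d x y / 2 := hft₀
  linarith

end Stmt7Aux

/-- A forward complete forward metric space is a forward geodesic space
(every pair of points is joined by a minimal geodesic) if and only if every pair of points
`x, y` admits a midpoint, i.e. a point `z` with `d(x,z) = d(z,y) = d(x,y)/2`. -/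
theorem stmt7 (d : X → X → ℝ) (hd : IsIrrevMetric d) (star : X) (Θ : ℝ → ℝ)
    (hΘ : PointedForwardTheta d star Θ) (hcompl : FwdComplete d) :
    (∀ x y : X, ∃ γ : ℝ → X, IsMinGeodesic d γ ∧ γ 0 = x ∧ γ 1 = y) ↔
    (∀ x y : X, ∃ z : X, d x z = d x y / 2 ∧ d z y = d x y / 2) := by
  constructor
  · intro hgeo x y
    obtain ⟨γ, hγ, hγ0, hγ1⟩ := hgeo x y
    exact Stmt7Aux.midpoint_of_geodesic hd hΘ hγ hγ0 hγ1
  · intro hmid x y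
    classical
    choose m hm1 hm2 using hmid
    exact Stmt7Aux.exists_geodesic hd (fun a b => ⟨hm1 a b, hm2 a b⟩) star Θ hΘ hcompl
end
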